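/- arXiv:1702.07478 — 2 statements merged into one kernel-verified Lean document; each statement's English description precedes it below -/
import Mathlib

section
/- Let S be a finite type, P : S → S → ℝ a matrix, R an ordinary lumping for P, and i₁, i₂ ∈ S with (i₁,i₂) ∈ R. Suppose ψ, ψ' : S → ℝ are the steady-state limits of the transient distributions: for every t ∈ S, (P^k)(i₁,t) → ψ(t) and (P^k)(i₂,t) → ψ'(t) as k → ∞. Then for every R-equivalence class H, Σ_{t∈H} ψ(t) = Σ_{t∈H} ψ'(t). (Proposition 8.1: for bisimilar processes the steady-state probabilities to be in an equivalence class coincide.) -/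
/-! The class sums of the rows of `P ^ k` agree at `R`-related states for every `k`, since ordinary
lumpings are closed under matrix products: the class sum of row `j` of `P * Q` is
`∑ u, P j u * g u` with `g u` the class sum of row `u` of `Q`, which is constant on classes; grouping
the sum by classes turns it into a combination of class sums of row `j` of `P`. The class sums of
the limits are then limits of equal sequences. -/

open Filter

/-- The sum of `f` over the set of states `H`. -/
noncomputable def classSum {S : Type*} [Fintype S] (H : Set S) (f : S → ℝ) : ℝ :=
  ∑ s, H.indicator f s

/-- `H` is an equivalence class of the relation `R`. -/
def IsClass {S : Type*} (R : S → S → Prop) (H : Set S) : Prop :=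
  ∃ s, H = {t | R s t}

/-- `R` is an ordinary lumping for the matrix `P`. -/
def IsLumping {S : Type*} [Fintype S] (P : S → S → ℝ) (R : S → S → Prop) : Prop :=
  Equivalence R ∧
    ∀ s₁ s₂, R s₁ s₂ → ∀ H : Set S, IsClass R H →
      classSum H (P s₁) = classSum H (P s₂)

open Finset

lemma classSum_eq_sum_filter {S : Type*} [Fintype S] (H : Set S) [DecidablePred (· ∈ H)]
    (f : S → ℝ) : classSum H f = ∑ s with s ∈ H, f s := by
  rw [classSum, sum_filter]
  exact sum_congr rfl fun s _ => Set.indicator_apply H f s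

lemma tendsto_classSum {S ι : Type*} [Fintype S] {l : Filter ι} {f : ι → S → ℝ} {ψ : S → ℝ}
    (hf : ∀ t, Tendsto (fun k => f k t) l (nhds (ψ t))) (H : Set S) :
    Tendsto (fun k => classSum H (f k)) l (nhds (classSum H ψ)) := by
  classical
  simp only [classSum_eq_sum_filter]
  exact tendsto_finsetSum _ fun t _ => hf t

lemma IsClass.mem_iff_of_rel {S : Type*} {R : S → S → Prop} (hR : Equivalence R) {H : Set S}
    (hH : IsClass R H) {a b : S} (hab : R a b) : a ∈ H ↔ b ∈ H := by
  obtain ⟨s, rfl⟩ := hH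
  exact ⟨fun h => hR.trans h hab, fun h => hR.trans h (hR.symm hab)⟩

lemma isClass_quotient_fiber {S : Type*} (st : Setoid S) (c : Quotient st) :
    IsClass st.r {t | ⟦t⟧ = c} := by
  refine ⟨c.out, Set.ext fun t => ?_⟩
  conv_lhs => rw [← c.out_eq]
  exact Quotient.eq.trans (Setoid.comm' st)

lemma sum_mul_quotient_mk {S : Type*} [Fintype S] (st : Setoid S) [Fintype (Quotient st)]
    (f : S → ℝ) (φ : Quotient st → ℝ) :
    ∑ u, f u * φ ⟦u⟧ = ∑ c, φ c * classSum {t | ⟦t⟧ = c} f := by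
  classical
  rw [← sum_fiberwise univ (fun u => (⟦u⟧ : Quotient st))]
  refine sum_congr rfl fun c _ => ?_
  rw [classSum_eq_sum_filter, mul_sum]
  refine sum_congr (by ext; simp) fun u hu => ?_
  rw [(mem_filter.1 hu).2, mul_comm]

lemma classSum_one_row {S : Type*} [Fintype S] [DecidableEq S] (H : Set S) (j : S) :
    classSum H ((1 : Matrix S S ℝ) j) = H.indicator 1 j := by
  classical
  rw [classSum_eq_sum_filter]
  simp [Matrix.one_apply, Set.indicator_apply]

lemma classSum_mul_row {S : Type*} [Fintype S] (P Q : Matrix S S ℝ) (H : Set S) (j : S) :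
    classSum H ((P * Q) j) = ∑ u, P j u * classSum H (Q u) := by
  classical
  simp only [classSum_eq_sum_filter, Matrix.mul_apply, mul_sum]
  exact sum_comm

namespace IsLumping

variable {S : Type*} [Fintype S] {R : S → S → Prop}

lemma one [DecidableEq S] (hR : Equivalence R) : IsLumping (1 : Matrix S S ℝ) R := by
  refine ⟨hR, fun s₁ s₂ hs H hH => ?_⟩
  classical
  simp only [classSum_one_row, Set.indicator_apply, Pi.one_apply, hH.mem_iff_of_rel hR hs]

lemma mul {P Q : Matrix S S ℝ} (hP : IsLumping P R) (hQ : IsLumping Q R) :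
    IsLumping (P * Q) R := by
  classical
  refine ⟨hP.1, fun s₁ s₂ hs H hH => ?_⟩
  let st : Setoid S := ⟨R, hP.1⟩
  let φ : Quotient st → ℝ :=
    Quotient.lift (fun u => classSum H (Q u)) fun _ _ huv => hQ.2 _ _ huv H hH
  have hrow : ∀ j, classSum H ((P * Q) j) = ∑ c, φ c * classSum {t | ⟦t⟧ = c} (P j) := fun j => by
    rw [classSum_mul_row, ← sum_mul_quotient_mk]
    rfl
  simp only [hrow, hP.2 s₁ s₂ hs _ (isClass_quotient_fiber st _)]

lemma pow [DecidableEq S] {P : Matrix S S ℝ} (hP : IsLumping P R) (k : ℕ) :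
    IsLumping (P ^ k) R := by
  induction k with
  | zero => exact one hP.1
  | succ k ih => exact ih.mul hP

end IsLumping

/-- Proposition 8.1: if `(i₁, i₂)` belongs to an ordinary lumping `R` for `P`
and `ψ`, `ψ'` are the steady-state limits of the transient distributions
started in `i₁` and `i₂`, then the steady-state probabilities to be in every
`R`-equivalence class coincide. -/
theorem lumping_steady_state_class_sums {S : Type*} [Fintype S] [DecidableEq S]
    (P : Matrix S S ℝ) (R : S → S → Prop)
    (hR : IsLumping (fun s t => P s t) R)
    (i₁ i₂ : S) (h : R i₁ i₂)
    (ψ ψ' : S → ℝ)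
    (hψ : ∀ t, Tendsto (fun k : ℕ => (P ^ k) i₁ t) atTop (nhds (ψ t)))
    (hψ' : ∀ t, Tendsto (fun k : ℕ => (P ^ k) i₂ t) atTop (nhds (ψ' t))) :
    ∀ H : Set S, IsClass R H → classSum H ψ = classSum H ψ' := by
  intro H hH
  have hsums : ∀ k : ℕ, classSum H ((P ^ k) i₁) = classSum H ((P ^ k) i₂) :=
    fun k => (hR.pow k).2 i₁ i₂ h H hH
  refine tendsto_nhds_unique ?_ (tendsto_classSum hψ' H)
  simpa only [hsums] using tendsto_classSum hψ H
end

section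
/- Let S be a finite type, L a type of labels, p a step kernel on S, and R a step stochastic bisimulation for p. For a finite sequence of labels A₁, …, A_n and a state s₀ ∈ S, define the derived step-trace probability PT(A₁⋯A_n, s₀) := Σ over all tuples (s₁,…,s_n) ∈ S^n of Π_{i=1}^n p s_{i−1} A_i s_i. Then for every (s₀, s̄₀) ∈ R and every label sequence A₁,…,A_n, PT(A₁⋯A_n, s₀) = PT(A₁⋯A_n, s̄₀); i.e. the derived step-trace probability is constant on R-equivalence classes. (Key claim in the proof of Theorem 8.1.) -/
/-- The overall probability to move from `s` into the set of states `H`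
via steps with multiaction part `A`. -/
noncomputable def PMA {S L : Type*} [Fintype S]
    (p : S → L → S → ℝ) (A : L) (s : S) (H : Set S) : ℝ :=
  ∑ t, H.indicator (p s A) t

/-- `R` is a step stochastic bisimulation for the step kernel `p`. -/
def IsStepBisim {S L : Type*} [Fintype S]
    (p : S → L → S → ℝ) (R : S → S → Prop) : Prop :=
  Equivalence R ∧
    ∀ s₁ s₂, R s₁ s₂ → ∀ H : Set S, IsClass R H → ∀ A : L,
      PMA p A s₁ H = PMA p A s₂ H

/-- The derived step-trace probability `PT(A₁⋯Aₙ, s₀)`: the sum over all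
tuples `(s₁, …, sₙ)` of the products `Π_{i=1}^n p s_{i−1} A_i s_i`. -/
noncomputable def PT {S L : Type*} [Fintype S]
    (p : S → L → S → ℝ) : List L → S → ℝ
  | [], _ => 1
  | A :: As, s => ∑ t, p s A t * PT p As t

/-! By induction on the label sequence, `PT p As` is constant on `R`-classes. One more step
sums `p s A ·` against this class-invariant function; regrouped by classes, that sum is a
combination of the `PMA p A s H` over the classes `H`, which the bisimulation makes equal
for `R`-related `s`. -/

theorem sum_mul_eq_sum_quotient {S M : Type*} [Fintype S] [NonUnitalNonAssocSemiring M]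
    (r : Setoid S) [DecidableRel r.r] (g f : S → M) (hf : ∀ a b, r a b → f a = f b) :
    ∑ t, g t * f t = ∑ q : Quotient r, (∑ t, {t | r q.out t}.indicator g t) * f q.out := by
  rw [← Finset.sum_fiberwise Finset.univ (fun t => (⟦t⟧ : Quotient r))]
  refine Finset.sum_congr rfl fun q _ => ?_
  have mk_eq_iff (t : S) : (⟦t⟧ : Quotient r) = q ↔ r q.out t := by
    conv_lhs => rw [← q.out_eq]
    exact ⟨fun h => r.symm (Quotient.exact h), fun h => (Quotient.sound h).symm⟩
  rw [Finset.sum_mul, Finset.sum_filter]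
  refine Finset.sum_congr rfl fun t _ => ?_
  by_cases ht : r q.out t
  · simp [(mk_eq_iff t).2 ht, ht, hf _ _ ht]
  · simp [mk_eq_iff, ht]

theorem IsStepBisim.sum_mul_eq {S L : Type*} [Fintype S] {p : S → L → S → ℝ}
    {R : S → S → Prop} (hR : IsStepBisim p R) {f : S → ℝ} (hf : ∀ a b, R a b → f a = f b)
    {s₁ s₂ : S} (h : R s₁ s₂) (A : L) :
    ∑ t, p s₁ A t * f t = ∑ t, p s₂ A t * f t := by
  classical
  let r : Setoid S := ⟨R, hR.1⟩
  rw [sum_mul_eq_sum_quotient r _ f hf, sum_mul_eq_sum_quotient r _ f hf]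
  refine Finset.sum_congr rfl fun q _ => ?_
  rw [← PMA, ← PMA]
  exact congrArg (· * f q.out) (hR.2 s₁ s₂ h _ ⟨q.out, rfl⟩ A)

theorem stepBisim_trace_prob_constant_general {S L : Type*} [Fintype S]
    (p : S → L → S → ℝ)
    (R : S → S → Prop) (hR : IsStepBisim p R) :
    ∀ s₀ s₀' : S, R s₀ s₀' → ∀ As : List L, PT p As s₀ = PT p As s₀' := by
  intro s₀ s₀' h As
  induction As generalizing s₀ s₀' with
  | nil => rfl
  | cons A As ih => exact hR.sum_mul_eq ih h A

/-- Key claim in the proof of Theorem 8.1: the derived step-trace probability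
is constant on the equivalence classes of a step stochastic bisimulation. -/
theorem stepBisim_trace_prob_constant {S L : Type*} [Fintype S]
    (p : S → L → S → ℝ)
    (hp_nonneg : ∀ s A t, 0 ≤ p s A t)
    (R : S → S → Prop) (hR : IsStepBisim p R) :
    ∀ s₀ s₀' : S, R s₀ s₀' → ∀ As : List L, PT p As s₀ = PT p As s₀' :=
  stepBisim_trace_prob_constant_general p R hR
end
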